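/- arXiv:math/0302344 — 6 statements merged into one kernel-verified Lean document; each statement's English description precedes it below -/
import Mathlib

section
/- For every clockwise elementary cycle C of the planar grid, the sum of the spins of the arcs of C equals 4·Dis(C), where Dis(C) is the number of black cells minus the number of white cells enclosed by C (i.e., lying in the bounded region delimited by C). -/
open Classical

noncomputable section

abbrev Vtx : Type := ℤ × ℤ
abbrev GArc : Type := Vtx × Vtx

/-- `a` is an arc of the grid graph `Λ⁺`: its endpoints differ by a unit vector. -/
def IsArc (a : GArc) : Prop :=
  (a.2.1 - a.1.1).natAbs + (a.2.2 - a.1.2).natAbs = 1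

/-- reversal of an arc -/
def arev (a : GArc) : GArc := (a.2, a.1)

/-- `+1` if the cell with lower-left corner `c` is black, `-1` if it is white
(checkerboard coloring). -/
def colorSign (c : Vtx) : ℤ := if (c.1 + c.2) % 2 = 0 then 1 else -1

/-- spin of an arc: `+1` if a traveler along the arc has a white cell on its left,
`-1` otherwise. -/
def sp (a : GArc) : ℤ :=
  colorSign a.1 * ((a.2.2 - a.1.2) ^ 2 - (a.2.1 - a.1.1) ^ 2)

/-- the arcs of a path/cycle given by its list of vertices -/
def arcsOf (C : List Vtx) : List GArc := C.zip C.tail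

/-- sum of a function `g` on arcs over all the arcs of `C` (with multiplicity) -/
def sumOn (g : GArc → ℤ) (C : List Vtx) : ℤ := ((arcsOf C).map g).sum

/-- a (closed) cycle of the grid -/
def IsCycle (C : List Vtx) : Prop :=
  2 ≤ C.length ∧ C.head? = C.getLast? ∧ ∀ a ∈ arcsOf C, IsArc a

/-- an elementary cycle: no repeated vertex except the endpoints -/
def IsElemCycle (C : List Vtx) : Prop := IsCycle C ∧ C.dropLast.Nodup

/-- contribution of an arc to the winding number of a cycle around the center of
cell `c` (crossings of the horizontal ray going East from the center of `c`). -/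
def windTerm (c : Vtx) (a : GArc) : ℤ :=
  if a.1.1 = a.2.1 ∧ c.1 < a.1.1 ∧ min a.1.2 a.2.2 = c.2 then a.2.2 - a.1.2 else 0

/-- winding number of the cycle `C` around the center of the cell `c` -/
def wind (C : List Vtx) (c : Vtx) : ℤ := sumOn (windTerm c) C

/-- a cycle is clockwise when its winding number around any cell is nonpositive
(`-1` on enclosed cells, `0` elsewhere) -/
def IsClockwise (C : List Vtx) : Prop := ∀ c : Vtx, wind C c ≤ 0

/-- a cell is enclosed by `C` when the winding number of `C` around it is nonzero -/
def Encloses (C : List Vtx) (c : Vtx) : Prop := wind C c ≠ 0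

/-- number of black cells minus number of white cells enclosed by a clockwise cycle -/
def Dis (C : List Vtx) : ℤ := -∑ᶠ c : Vtx, wind C c * colorSign c

/-- 4-adjacency of cells (shared edge) -/
def adj4 (c c' : Vtx) : Prop := (c'.1 - c.1).natAbs + (c'.2 - c.2).natAbs = 1

/-- 8-adjacency of cells (shared vertex at least) -/
def adj8 (c c' : Vtx) : Prop := c ≠ c' ∧ (c'.1 - c.1).natAbs ≤ 1 ∧ (c'.2 - c.2).natAbs ≤ 1

/-- a figure: a nonempty, finite, 4-connected set of cells such that no vertex has
all its incident edges on the boundary (no diagonal pinch, so no vertex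
duplication is needed). -/
def IsFigure (F : Finset Vtx) : Prop :=
  F.Nonempty ∧
  (∀ c ∈ F, ∀ c' ∈ F, Relation.ReflTransGen (fun x y => x ∈ F ∧ y ∈ F ∧ adj4 x y) c c') ∧
  (∀ x y : ℤ,
    ¬((x - 1, y - 1) ∈ F ∧ (x, y) ∈ F ∧ (x, y - 1) ∉ F ∧ (x - 1, y) ∉ F) ∧
    ¬((x, y - 1) ∈ F ∧ (x - 1, y) ∈ F ∧ (x - 1, y - 1) ∉ F ∧ (x, y) ∉ F))

/-- one of the two cells adjacent to the edge `[a]` -/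
def cellA (a : GArc) : Vtx :=
  if a.1.2 = a.2.2 then (min a.1.1 a.2.1, a.1.2) else (a.1.1, min a.1.2 a.2.2)

/-- the other cell adjacent to the edge `[a]` -/
def cellB (a : GArc) : Vtx :=
  if a.1.2 = a.2.2 then (min a.1.1 a.2.1, a.1.2 - 1) else (a.1.1 - 1, min a.1.2 a.2.2)

/-- arcs of the graph `G_F`: the edge `[a]` is a side of a cell of `F` -/
def ArcF (F : Finset Vtx) (a : GArc) : Prop := IsArc a ∧ (cellA a ∈ F ∨ cellB a ∈ F)

/-- boundary arcs of `F`: exactly one of the two adjacent cells is in `F` -/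
def BoundaryArcF (F : Finset Vtx) (a : GArc) : Prop :=
  IsArc a ∧ ¬(cellA a ∈ F ↔ cellB a ∈ F)

/-- interior arcs of `F`: both adjacent cells are in `F` -/
def InteriorArcF (F : Finset Vtx) (a : GArc) : Prop :=
  IsArc a ∧ cellA a ∈ F ∧ cellB a ∈ F

/-- `v` is a corner of the cell with lower-left corner `c` -/
def isCorner (v c : Vtx) : Prop :=
  (v.1 = c.1 ∨ v.1 = c.1 + 1) ∧ (v.2 = c.2 ∨ v.2 = c.2 + 1)

/-- vertices of `G_F`: the corners of the cells of `F` -/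
def VF (F : Finset Vtx) : Set Vtx := {v | ∃ c ∈ F, isCorner v c}

/-- a cycle of the graph `G_F` -/
def IsCycleF (F : Finset Vtx) (C : List Vtx) : Prop :=
  2 ≤ C.length ∧ C.head? = C.getLast? ∧ ∀ a ∈ arcsOf C, ArcF F a

/-- an elementary cycle of the graph `G_F` -/
def IsElemCycleF (F : Finset Vtx) (C : List Vtx) : Prop :=
  IsCycleF F C ∧ C.dropLast.Nodup

/-- number of black cells of `F` minus number of white cells of `F` enclosed by
the clockwise cycle `C` -/
def DisF (F : Finset Vtx) (C : List Vtx) : ℤ := -∑ c ∈ F, wind C c * colorSign c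

/-- `ef` is skew-symmetric on the arcs of `G_F` -/
def IsSkewOnF (F : Finset Vtx) (ef : GArc → ℤ) : Prop :=
  ∀ a, ArcF F a → ef (arev a) = -ef a

/-- an equilibrium function of the figure `F` -/
def IsEquilibrium (F : Finset Vtx) (ef : GArc → ℤ) : Prop :=
  IsSkewOnF F ef ∧
  ∀ C, IsElemCycleF F C → IsClockwise C → sumOn sp C + sumOn ef C = 4 * DisF F C

/-- the four sides of the cell `c`, as canonically oriented arcs -/
def sides (c : Vtx) : List GArc :=
  [((c.1, c.2), (c.1 + 1, c.2)), ((c.1, c.2 + 1), (c.1 + 1, c.2 + 1)),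
   ((c.1, c.2), (c.1, c.2 + 1)), ((c.1 + 1, c.2), (c.1 + 1, c.2 + 1))]

/-- a domino tiling of `F`, encoded by the symmetric set `D` of the arcs whose
underlying edges are the central axes of its dominoes: every central axis has
both of its adjacent cells in `F` (dominoes are included in `F`), and every cell
of `F` is covered by exactly one domino (exactly one of its sides is a central
axis): no overlap and no gap. -/
def IsTiling (F : Finset Vtx) (D : Set GArc) : Prop :=
  (∀ a ∈ D, arev a ∈ D) ∧
  (∀ a ∈ D, IsArc a ∧ cellA a ∈ F ∧ cellB a ∈ F) ∧
  (∀ c ∈ F, ∃! a, a ∈ sides c ∧ a ∈ D)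

/-- characteristic function of a tiling: `1` on central axes, `0` elsewhere -/
def chi (D : Set GArc) (a : GArc) : ℤ := if a ∈ D then 1 else 0

/-- the height difference function of a tiling -/
def gT (ef : GArc → ℤ) (D : Set GArc) (a : GArc) : ℤ :=
  ef a - sp a + 2 * sp a * (1 - 2 * chi D a)

/-- the function `t`: `eq(a)-sp(a)+2` on interior arcs, `eq(a)+sp(a)` on boundary arcs -/
def tArc (F : Finset Vtx) (ef : GArc → ℤ) (a : GArc) : ℤ :=
  if cellA a ∈ F ∧ cellB a ∈ F then ef a - sp a + 2 else ef a + sp a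

/-- the function `b`: `eq(a)-sp(a)-2` on interior arcs, `eq(a)+sp(a)` on boundary arcs -/
def bArc (F : Finset Vtx) (ef : GArc → ℤ) (a : GArc) : ℤ :=
  if cellA a ∈ F ∧ cellB a ∈ F then ef a - sp a - 2 else ef a + sp a

/-- the 8-connected component of the cell `c` in the complement of `F` -/
def comp8 (F : Finset Vtx) (c : Vtx) : Set Vtx :=
  {c' | Relation.ReflTransGen (fun x y => x ∉ F ∧ y ∉ F ∧ adj8 x y) c c'}

/-- `c` belongs to a hole of `F` (a finite 8-connected component of the complement) -/
def IsHoleCell (F : Finset Vtx) (c : Vtx) : Prop := c ∉ F ∧ (comp8 F c).Finite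

/-- `c` belongs to `H_∞`, the infinite 8-connected component of the complement -/
def IsHinfCell (F : Finset Vtx) (c : Vtx) : Prop := c ∉ F ∧ ¬(comp8 F c).Finite

/-- `w` is a vertex of `V_F` on the boundary of `H_∞` -/
def OnOuterBoundary (F : Finset Vtx) (w : Vtx) : Prop :=
  w ∈ VF F ∧ ∃ c, IsHinfCell F c ∧ isCorner w c

/-- vertices on the boundary of `F` -/
def Vb (F : Finset Vtx) : Set Vtx :=
  {v | (∃ c ∈ F, isCorner v c) ∧ ∃ c, c ∉ F ∧ isCorner v c}

/-- `h` belongs to the class `H_F` of height functions -/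
def InHF (F : Finset Vtx) (ef : GArc → ℤ) (w0 : Vtx) (h : Vtx → ℤ) : Prop :=
  h w0 = 0 ∧ ∀ a, ArcF F a →
    (h a.2 - h a.1 = bArc F ef a ∨ h a.2 - h a.1 = tArc F ef a)

/-- `h` is the height function induced by the tiling `D` (based at `w0`) -/
def IsHeightOf (F : Finset Vtx) (ef : GArc → ℤ) (D : Set GArc) (w0 : Vtx)
    (h : Vtx → ℤ) : Prop :=
  h w0 = 0 ∧ ∀ a, ArcF F a → h a.2 - h a.1 = gT ef D a

/-- a critical cycle: an elementary cycle of `G_F` with `t(C) = 0` -/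
def CriticalCycle (F : Finset Vtx) (ef : GArc → ℤ) (C : List Vtx) : Prop :=
  IsElemCycleF F C ∧ sumOn (tArc F ef) C = 0

/-- a strongly critical cycle: critical, and `sp(a) = 1` on all its interior arcs -/
def StronglyCriticalCycle (F : Finset Vtx) (ef : GArc → ℤ) (C : List Vtx) : Prop :=
  CriticalCycle F ef C ∧ ∀ a ∈ arcsOf C, InteriorArcF F a → sp a = 1

/-- two vertices are critically equivalent when some critical cycle passes
through both -/
def critRel (F : Finset Vtx) (ef : GArc → ℤ) (v v' : Vtx) : Prop :=
  ∃ C, CriticalCycle F ef C ∧ v ∈ C ∧ v' ∈ C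

/-- the forced component of the vertex `v` (class of the equivalence relation
generated by critical equivalence) -/
def fcomp (F : Finset Vtx) (ef : GArc → ℤ) (v : Vtx) : Set Vtx :=
  {v' | v' ∈ VF F ∧ Relation.EqvGen (critRel F ef) v v'}

/-- `S` is a forced component of `F` -/
def IsForcedComponent (F : Finset Vtx) (ef : GArc → ℤ) (S : Set Vtx) : Prop :=
  ∃ v ∈ VF F, S = fcomp F ef v

/-- `a` is an arc of the graph `G_T` of the tiling `D` -/
def GTArc (F : Finset Vtx) (ef : GArc → ℤ) (D : Set GArc) (a : GArc) : Prop :=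
  ArcF F a ∧ gT ef D a = tArc F ef a

/-- there is a directed path in `G_T` from `u` to `v` -/
def GTReach (F : Finset Vtx) (ef : GArc → ℤ) (D : Set GArc) (u v : Vtx) : Prop :=
  Relation.ReflTransGen (fun x y => GTArc F ef D (x, y)) u v

/-- the result of an upward flip on the component `S`: add `4` on `S` -/
def flipUpAt (S : Set Vtx) (h : Vtx → ℤ) : Vtx → ℤ :=
  fun v => h v + S.indicator (fun _ => (4 : ℤ)) v

/-- the result of a downward flip on the component `S`: subtract `4` on `S` -/
def flipDownAt (S : Set Vtx) (h : Vtx → ℤ) : Vtx → ℤ :=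
  fun v => h v - S.indicator (fun _ => (4 : ℤ)) v

/-- `|h(v_S) - h'(v_S)|` for a representative `v_S` of `S` -/
def compDiff (h h' : Vtx → ℤ) (S : Set Vtx) : ℤ :=
  if hS : S.Nonempty then |h hS.some - h' hS.some| else 0

/-- the distance `Δ(h,h') = Σ_U |h(v_U) - h'(v_U)|` over forced components `U` -/
def Delta (F : Finset Vtx) (ef : GArc → ℤ) (h h' : Vtx → ℤ) : ℤ :=
  ∑ᶠ S ∈ {S : Set Vtx | IsForcedComponent F ef S}, compDiff h h' S

/-- a sequence of `n` allowed upward flips at forced components distinct from `U_∞` -/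
def UpFlipSeq (F : Finset Vtx) (ef : GArc → ℤ) (w0 : Vtx) (f : ℕ → Vtx → ℤ)
    (n : ℕ) : Prop :=
  ∀ i < n, ∃ S, IsForcedComponent F ef S ∧ S ≠ fcomp F ef w0 ∧
    InHF F ef w0 (f i) ∧ InHF F ef w0 (f (i + 1)) ∧ f (i + 1) = flipUpAt S (f i)

/-- a sequence of `n` allowed (upward or downward) flips, flipping at step `i`
the forced component `s i` (distinct from `U_∞`) -/
def FlipSeq (F : Finset Vtx) (ef : GArc → ℤ) (w0 : Vtx) (f : ℕ → Vtx → ℤ)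
    (s : ℕ → Set Vtx) (n : ℕ) : Prop :=
  ∀ i < n, IsForcedComponent F ef (s i) ∧ s i ≠ fcomp F ef w0 ∧
    InHF F ef w0 (f i) ∧ InHF F ef w0 (f (i + 1)) ∧
    (f (i + 1) = flipUpAt (s i) (f i) ∨ f (i + 1) = flipDownAt (s i) (f i))

/-- the four arcs of the two horizontal edges through `v` (central axes of the
pair of vertical dominoes covering the 2×2 square centered at `v`) -/
def hPairAxes (v : Vtx) : Set GArc :=
  {((v.1 - 1, v.2), v), (v, (v.1 - 1, v.2)), (v, (v.1 + 1, v.2)), ((v.1 + 1, v.2), v)}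

/-- the four arcs of the two vertical edges through `v` (central axes of the
pair of horizontal dominoes covering the 2×2 square centered at `v`) -/
def vPairAxes (v : Vtx) : Set GArc :=
  {((v.1, v.2 - 1), v), (v, (v.1, v.2 - 1)), (v, (v.1, v.2 + 1)), ((v.1, v.2 + 1), v)}

/-- a local flip: replace the pair of dominoes covering a 2×2 square by the
other pair covering the same square -/
def LocalFlip (D D' : Set GArc) : Prop :=
  ∃ v : Vtx, (hPairAxes v ⊆ D ∧ D' = (D \ hPairAxes v) ∪ vPairAxes v) ∨
             (vPairAxes v ⊆ D ∧ D' = (D \ vPairAxes v) ∪ hPairAxes v)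

/-- a sequence of `n` local flips between tilings of `F` -/
def LocalFlipSeq (F : Finset Vtx) (g : ℕ → Set GArc) (n : ℕ) : Prop :=
  ∀ i < n, IsTiling F (g i) ∧ IsTiling F (g (i + 1)) ∧ LocalFlip (g i) (g (i + 1))

/-- `h` is a maximal element of `(H_F, ≤)` -/
def MaximalInHF (F : Finset Vtx) (ef : GArc → ℤ) (w0 : Vtx) (h : Vtx → ℤ) : Prop :=
  InHF F ef w0 h ∧ ∀ h', InHF F ef w0 h' →
    (∀ v ∈ VF F, h v ≤ h' v) → ∀ v ∈ VF F, h' v = h v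

/-- `h` is a minimal element of `(H_F, ≤)` -/
def MinimalInHF (F : Finset Vtx) (ef : GArc → ℤ) (w0 : Vtx) (h : Vtx → ℤ) : Prop :=
  InHF F ef w0 h ∧ ∀ h', InHF F ef w0 h' →
    (∀ v ∈ VF F, h' v ≤ h v) → ∀ v ∈ VF F, h' v = h v

/-- an elementary cycle of `G_F` enclosing a single cell of `F` -/
def AroundSingleCell (F : Finset Vtx) (C : List Vtx) : Prop :=
  IsElemCycleF F C ∧ ∃ c ∈ F, ∀ c' : Vtx, wind C c' ≠ 0 ↔ c' = c

/-- a cycle of `G_F` following clockwise the boundary of a hole of `F`: it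
winds `-1` around each cell of the hole and `0` around every other cell -/
def IsClockwiseHoleContour (F : Finset Vtx) (C : List Vtx) : Prop :=
  IsElemCycleF F C ∧ ∃ c₀, IsHoleCell F c₀ ∧
    (∀ c ∈ comp8 F c₀, wind C c = -1) ∧ (∀ c ∉ comp8 F c₀, wind C c = 0)

end

/-!
Fix a column `L` to the left of the cycle. For a unit arc `a`, `2 sp(a)` plus the increment of the
potential `v ↦ 2 colorSign (L, v.2) - colorSign v` along `a` equals `-8` times the sum of
`windTerm c a · colorSign c` over the cells `c` right of `L`: for a vertical arc at column `x`
this is an alternating sum of colour signs over the row strip `L ≤ c.1 < x`, and it vanishes for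
horizontal arcs. Around a closed walk the increments cancel, and exchanging the two sums turns
the right-hand side into `-8 ∑ wind C c · colorSign c`. The cells left of `L` do not contribute,
since every horizontal line is crossed upwards as often as downwards.
-/

lemma sumOn_congr {f g : GArc → ℤ} {C : List Vtx} (h : ∀ a ∈ arcsOf C, f a = g a) :
    sumOn f C = sumOn g C := by
  rw [sumOn, sumOn, List.map_congr_left h]

lemma sumOn_add (f g : GArc → ℤ) (C : List Vtx) :
    sumOn (fun a => f a + g a) C = sumOn f C + sumOn g C :=
  List.sum_map_add

lemma sumOn_const_mul (k : ℤ) (f : GArc → ℤ) (C : List Vtx) :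
    sumOn (fun a => k * f a) C = k * sumOn f C :=
  List.sum_map_mul_left _ _ _

lemma sumOn_mul_const (k : ℤ) (f : GArc → ℤ) (C : List Vtx) :
    sumOn (fun a => f a * k) C = sumOn f C * k :=
  List.sum_map_mul_right _ _ _

lemma sumOn_eq_zero {f : GArc → ℤ} {C : List Vtx} (h : ∀ a ∈ arcsOf C, f a = 0) :
    sumOn f C = 0 :=
  List.sum_eq_zero fun x hx => by
    obtain ⟨a, ha, rfl⟩ := List.mem_map.mp hx
    exact h a ha

lemma sum_sumOn_comm {ι : Type*} (s : Finset ι) (f : ι → GArc → ℤ) (C : List Vtx) :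
    ∑ i ∈ s, sumOn (f i) C = sumOn (fun a => ∑ i ∈ s, f i a) C := by
  unfold sumOn
  induction arcsOf C with
  | nil => simp
  | cons a l ih => simp [Finset.sum_add_distrib, ih]

lemma sumOn_sub_cons (g : Vtx → ℤ) (v : Vtx) (l : List Vtx) :
    sumOn (fun a => g a.2 - g a.1) (v :: l) =
      g ((v :: l).getLast (List.cons_ne_nil v l)) - g v := by
  induction l generalizing v with
  | nil => simp [sumOn, arcsOf]
  | cons w l ih =>
    rw [show sumOn _ (v :: w :: l) = g w - g v + sumOn _ (w :: l) from rfl, ih,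
      List.getLast_cons_cons]
    ring

lemma sumOn_sub_eq_zero_of_closed (g : Vtx → ℤ) {C : List Vtx} (hcl : C.head? = C.getLast?) :
    sumOn (fun a => g a.2 - g a.1) C = 0 := by
  cases C with
  | nil => rfl
  | cons v l =>
    rw [List.head?_cons, List.getLast?_eq_some_getLast (List.cons_ne_nil v l),
      Option.some_inj] at hcl
    rw [sumOn_sub_cons, ← hcl, sub_self]

lemma mem_of_mem_arcsOf {C : List Vtx} {a : GArc} (h : a ∈ arcsOf C) : a.1 ∈ C ∧ a.2 ∈ C :=
  ⟨(List.of_mem_zip h).1, List.mem_of_mem_tail (List.of_mem_zip h).2⟩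

lemma IsArc.cases {u v : Vtx} (h : IsArc (u, v)) :
    v = (u.1 + 1, u.2) ∨ v = (u.1 - 1, u.2) ∨ v = (u.1, u.2 + 1) ∨ v = (u.1, u.2 - 1) := by
  obtain ⟨x', y'⟩ := v
  unfold IsArc at h
  simp only [Prod.mk.injEq] at h ⊢
  omega

lemma exists_abs_le_of_list (C : List Vtx) :
    ∃ B : ℤ, ∀ v ∈ C, |v.1| ≤ B ∧ |v.2| ≤ B := by
  obtain ⟨B, hB⟩ := (C.toFinset.image fun v => max |v.1| |v.2|).exists_le
  exact ⟨B, fun v hv =>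
    max_le_iff.mp (hB _ (Finset.mem_image_of_mem _ (List.mem_toFinset.mpr hv)))⟩

lemma windTerm_eq_sub_of_lt {c : Vtx} {a : GArc} (ha : IsArc a) (hc : c.1 < a.1.1) :
    windTerm c a = (if c.2 < a.2.2 then 1 else 0) - (if c.2 < a.1.2 then 1 else 0) := by
  obtain ⟨u, v⟩ := a
  dsimp only at hc
  rcases ha.cases with rfl | rfl | rfl | rfl <;>
    simp only [windTerm, true_and] <;> split_ifs <;> omega

lemma wind_eq_zero_of_lt {C : List Vtx} (hC : IsCycle C) {c : Vtx} (hc : ∀ v ∈ C, c.1 < v.1) :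
    wind C c = 0 := by
  rw [wind, sumOn_congr fun a ha =>
    windTerm_eq_sub_of_lt (hC.2.2 a ha) (hc _ (mem_of_mem_arcsOf ha).1)]
  exact sumOn_sub_eq_zero_of_closed (fun v => if c.2 < v.2 then 1 else 0) hC.2.1

noncomputable def cellBox (B : ℤ) : Finset Vtx := Finset.Ico (-B) B ×ˢ Finset.Ico (-B) B

lemma wind_eq_zero_of_notMem_cellBox {C : List Vtx} (hC : IsCycle C) {B : ℤ}
    (hB : ∀ v ∈ C, |v.1| ≤ B ∧ |v.2| ≤ B) {c : Vtx} (hc : c ∉ cellBox B) :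
    wind C c = 0 := by
  rcases lt_or_ge c.1 (-B) with hleft | hleft
  · exact wind_eq_zero_of_lt hC fun v hv => by linarith [neg_abs_le v.1, (hB v hv).1]
  refine sumOn_eq_zero fun a ha => ?_
  obtain ⟨h1, h2⟩ := mem_of_mem_arcsOf ha
  obtain ⟨hx1, hy1⟩ := hB _ h1
  obtain ⟨hx2, hy2⟩ := hB _ h2
  rw [abs_le] at hx1 hy1 hx2 hy2
  have harc := hC.2.2 a ha
  unfold IsArc at harc
  simp only [cellBox, Finset.mem_product, Finset.mem_Ico, not_and_or, not_le, not_lt] at hc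
  simp only [windTerm]
  split_ifs <;> omega

lemma two_mul_sum_Ico_colorSign {L x : ℤ} (h : L ≤ x) (m : ℤ) :
    2 * ∑ k ∈ Finset.Ico L x, colorSign (k, m) = colorSign (L, m) - colorSign (x, m) := by
  induction x, h using Int.leInduction with
  | base => simp
  | succ x hx ih =>
    rw [Finset.Ico_add_one_right_eq_Icc, ← Finset.Ico_insert_right hx,
      Finset.sum_insert Finset.right_notMem_Ico, mul_add, ih]
    simp only [colorSign]
    split_ifs <;> omega

lemma two_mul_sum_cellBox_windTerm {B : ℤ} {u v : Vtx} (ha : IsArc (u, v))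
    (hu : |u.1| ≤ B ∧ |u.2| ≤ B) (hv : |v.1| ≤ B ∧ |v.2| ≤ B) :
    2 * ∑ c ∈ cellBox B, windTerm c (u, v) * colorSign c =
      if u.1 = v.1 then (v.2 - u.2) * (colorSign (-B, min u.2 v.2) - colorSign (u.1, min u.2 v.2))
      else 0 := by
  split_ifs with hvert
  · have hrow : (cellBox B).filter (fun c : Vtx => c.1 < u.1 ∧ min u.2 v.2 = c.2) =
        Finset.Ico (-B) u.1 ×ˢ {min u.2 v.2} := by
      ext ⟨x, y⟩
      have harc : (v.1 - u.1).natAbs + (v.2 - u.2).natAbs = 1 := ha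
      simp only [abs_le] at hu hv
      simp only [cellBox, Finset.mem_filter, Finset.mem_product, Finset.mem_Ico,
        Finset.mem_singleton]
      omega
    have hterm (c : Vtx) : windTerm c (u, v) * colorSign c =
        if c.1 < u.1 ∧ min u.2 v.2 = c.2 then (v.2 - u.2) * colorSign c else 0 := by
      unfold windTerm
      by_cases h : c.1 < u.1 ∧ min u.2 v.2 = c.2 <;> simp [h, ← hvert]
    rw [Finset.sum_congr rfl fun c _ => hterm c, ← Finset.sum_filter, hrow, Finset.sum_product,
      Finset.sum_comm, Finset.sum_singleton, ← Finset.mul_sum, mul_left_comm,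
      two_mul_sum_Ico_colorSign (neg_le_of_abs_le hu.1)]
  · exact mul_eq_zero_of_right 2 <| Finset.sum_eq_zero fun c _ => by simp [windTerm, hvert]

def spinPotential (L : ℤ) (v : Vtx) : ℤ := 2 * colorSign (L, v.2) - colorSign v

lemma two_mul_sp_add_sub_spinPotential {u v : Vtx} (ha : IsArc (u, v)) (L : ℤ) :
    2 * sp (u, v) + (spinPotential L v - spinPotential L u) =
      -4 * if u.1 = v.1 then
        (v.2 - u.2) * (colorSign (L, min u.2 v.2) - colorSign (u.1, min u.2 v.2)) else 0 := by
  rcases ha.cases with rfl | rfl | rfl | rfl <;>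
    norm_num [sp, spinPotential, colorSign] <;> split_ifs <;> omega

lemma two_mul_sumOn_sp {C : List Vtx} (hC : IsCycle C) {B : ℤ}
    (hB : ∀ v ∈ C, |v.1| ≤ B ∧ |v.2| ≤ B) :
    2 * sumOn sp C = -8 * ∑ c ∈ cellBox B, wind C c * colorSign c := by
  calc 2 * sumOn sp C
      = sumOn (fun a => 2 * sp a + (spinPotential (-B) a.2 - spinPotential (-B) a.1)) C := by
        rw [sumOn_add, sumOn_const_mul, sumOn_sub_eq_zero_of_closed _ hC.2.1, add_zero]
    _ = sumOn (fun a => -4 * (2 * ∑ c ∈ cellBox B, windTerm c a * colorSign c)) C := by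
        refine sumOn_congr fun ⟨u, v⟩ ha => ?_
        obtain ⟨hu, hv⟩ := mem_of_mem_arcsOf ha
        rw [two_mul_sp_add_sub_spinPotential (hC.2.2 _ ha),
          two_mul_sum_cellBox_windTerm (hC.2.2 _ ha) (hB u hu) (hB v hv)]
    _ = -8 * ∑ c ∈ cellBox B, wind C c * colorSign c := by
        simp only [wind, ← sumOn_mul_const, sum_sumOn_comm, ← mul_assoc, sumOn_const_mul]
        norm_num

lemma support_wind_mul_colorSign_subset {C : List Vtx} (hC : IsCycle C) {B : ℤ}
    (hB : ∀ v ∈ C, |v.1| ≤ B ∧ |v.2| ≤ B) :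
    Function.support (fun c => wind C c * colorSign c) ⊆ cellBox B := fun c hc => by
  by_contra hbox
  exact hc (by simp only [wind_eq_zero_of_notMem_cellBox hC hB hbox, zero_mul])

theorem spin_sum_eq_four_mul_dis_general (C : List Vtx)
    (hC : IsElemCycle C) :
    sumOn sp C = 4 * Dis C := by
  obtain ⟨B, hB⟩ := exists_abs_le_of_list C
  have h := two_mul_sumOn_sp hC.1 hB
  rw [Dis, finsum_eq_sum_of_support_subset _ (support_wind_mul_colorSign_subset hC.1 hB)]
  linarith

/-- For every clockwise elementary cycle `C` of the planar grid,
`sp(C) = 4·Dis(C)`. -/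
theorem spin_sum_eq_four_mul_dis (C : List Vtx)
    (hC : IsElemCycle C) (hcw : IsClockwise C) :
    sumOn sp C = 4 * Dis C :=
  spin_sum_eq_four_mul_dis_general C hC
end

section
/- Every figure F of the planar grid admits an equilibrium function, i.e., a skew-symmetric function eq:E_F→ℤ such that sp(C)+eq(C)=4·Dis_F(C) for every clockwise elementary cycle C of G_F. -/
open Classical

private lemma colorSign_snd (a : GArc) (h : IsArc a) :
    colorSign a.2 = -colorSign a.1 := by
  unfold IsArc at h
  unfold colorSign
  split_ifs with h1 h2 h2 <;> omega

private lemma sp_arev (a : GArc) (h : IsArc a) : sp (arev a) = -sp a := by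
  have hc := colorSign_snd a h
  simp only [sp, arev]
  rw [hc]; ring

private lemma windTerm_arev (c : Vtx) (a : GArc) :
    windTerm c (arev a) = -windTerm c a := by
  simp only [windTerm, arev]
  split_ifs with h1 h2 <;> omega

private lemma list_sum_add (l : List GArc) (f g : GArc → ℤ) :
    (l.map (fun a => f a + g a)).sum = (l.map f).sum + (l.map g).sum := by
  induction l with
  | nil => simp
  | cons x xs ih => simp only [List.map_cons, List.sum_cons, ih]; ring

private lemma list_sum_mul (l : List GArc) (r : ℤ) (f : GArc → ℤ) :
    (l.map (fun a => r * f a)).sum = r * (l.map f).sum := by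
  induction l with
  | nil => simp
  | cons x xs ih => simp only [List.map_cons, List.sum_cons, ih]; ring

private lemma list_sum_mulr (l : List GArc) (r : ℤ) (f : GArc → ℤ) :
    (l.map (fun a => f a * r)).sum = (l.map f).sum * r := by
  induction l with
  | nil => simp
  | cons x xs ih => simp only [List.map_cons, List.sum_cons, ih]; ring

private lemma list_sum_finset (l : List GArc) (F : Finset Vtx) (f : Vtx → GArc → ℤ) :
    (l.map (fun a => ∑ c ∈ F, f c a)).sum = ∑ c ∈ F, (l.map (f c)).sum := by
  induction l with
  | nil => simp
  | cons x xs ih =>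
    simp only [List.map_cons, List.sum_cons, ih, Finset.sum_add_distrib]


/-- Every figure of the planar grid admits an equilibrium function. -/
theorem exists_equilibrium (F : Finset Vtx) (hF : IsFigure F) :
    ∃ ef : GArc → ℤ, IsEquilibrium F ef := by
  refine ⟨fun a => -sp a - 4 * ∑ c ∈ F, windTerm c a * colorSign c, ?_, ?_⟩
  · intro a ha
    have h1 := sp_arev a ha.1
    have h2 : ∀ c, windTerm c (arev a) = -windTerm c a := fun c => windTerm_arev c a
    simp only [h1, h2, neg_mul]
    rw [Finset.sum_neg_distrib]
    ring
  · intro C _ _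
    simp only [sumOn, DisF]
    set l := arcsOf C with hl
    have step1 : (l.map (fun a => -sp a - 4 * ∑ c ∈ F, windTerm c a * colorSign c)).sum
        = -(l.map sp).sum - 4 * ∑ c ∈ F, (l.map (windTerm c)).sum * colorSign c := by
      have e1 : (fun a => -sp a - 4 * ∑ c ∈ F, windTerm c a * colorSign c)
          = fun a => (-1 : ℤ) * sp a + (-4 : ℤ) * ∑ c ∈ F, windTerm c a * colorSign c := by
        funext a; ring
      rw [e1, list_sum_add, list_sum_mul, list_sum_mul, list_sum_finset]
      rw [Finset.sum_congr rfl (fun c _ => list_sum_mulr l (colorSign c) (windTerm c))]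
      ring
    rw [step1]
    simp only [wind, sumOn, ← hl]
    ring
end

section
/- Let F be a figure with equilibrium function eq and fixed base vertex w₀ on the boundary of H_∞. For every function h∈H_F there exists a tiling T of F such that h=h_T. -/
open Classical

section AuxLemmas

lemma my_arev_arev (a : GArc) : arev (arev a) = a := rfl

lemma my_sp_pm {a : GArc} (ha : IsArc a) : sp a = 1 ∨ sp a = -1 := by
  unfold IsArc at ha
  have h1 : (a.2.1 - a.1.1 = 0 ∧ (a.2.2 - a.1.2 = 1 ∨ a.2.2 - a.1.2 = -1)) ∨
      (a.2.2 - a.1.2 = 0 ∧ (a.2.1 - a.1.1 = 1 ∨ a.2.1 - a.1.1 = -1)) := by omega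
  unfold sp colorSign
  rcases h1 with ⟨h2, h3 | h3⟩ | ⟨h2, h3 | h3⟩ <;> rw [h2, h3] <;> split_ifs <;> norm_num

lemma my_isArc_arev {a : GArc} (ha : IsArc a) : IsArc (arev a) := by
  show ((a.1.1 : ℤ) - a.2.1).natAbs + (a.1.2 - a.2.2).natAbs = 1
  unfold IsArc at ha
  omega

lemma my_sp_arev {a : GArc} (ha : IsArc a) : sp (arev a) = - sp a := by
  have hcs : colorSign a.2 = - colorSign a.1 := by
    unfold IsArc at ha
    unfold colorSign
    split_ifs <;> omega
  show colorSign a.2 * ((a.1.2 - a.2.2) ^ 2 - (a.1.1 - a.2.1) ^ 2)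
      = -(colorSign a.1 * ((a.2.2 - a.1.2) ^ 2 - (a.2.1 - a.1.1) ^ 2))
  rw [hcs]; ring

lemma my_cellA_arev {a : GArc} (ha : IsArc a) : cellA (arev a) = cellA a := by
  unfold IsArc at ha
  unfold cellA arev
  dsimp only
  by_cases hh : a.1.2 = a.2.2
  · rw [if_pos hh.symm, if_pos hh, min_comm, hh]
  · have h2 : a.2.1 = a.1.1 := by omega
    rw [if_neg (fun hx => hh hx.symm), if_neg hh, min_comm, h2]

lemma my_cellB_arev {a : GArc} (ha : IsArc a) : cellB (arev a) = cellB a := by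
  unfold IsArc at ha
  unfold cellB arev
  dsimp only
  by_cases hh : a.1.2 = a.2.2
  · rw [if_pos hh.symm, if_pos hh, min_comm, hh]
  · have h2 : a.2.1 = a.1.1 := by omega
    rw [if_neg (fun hx => hh hx.symm), if_neg hh, min_comm, h2]

variable (F : Finset Vtx) (ef : GArc → ℤ) (h : Vtx → ℤ)

/-- The candidate tiling. -/
def myD (F : Finset Vtx) (ef : GArc → ℤ) (h : Vtx → ℤ) : Set GArc :=
  {a : GArc | InteriorArcF F a ∧ h a.2 - h a.1 = ef a - 3 * sp a}

lemma myD_rev (hskew : IsSkewOnF F ef) : ∀ a ∈ myD F ef h, arev a ∈ myD F ef h := by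
  rintro a ⟨⟨ha, hA, hB⟩, hv⟩
  have haF : ArcF F a := ⟨ha, Or.inl hA⟩
  refine ⟨⟨my_isArc_arev ha, ?_, ?_⟩, ?_⟩
  · rw [my_cellA_arev ha]; exact hA
  · rw [my_cellB_arev ha]; exact hB
  · show h a.1 - h a.2 = ef (arev a) - 3 * sp (arev a)
    rw [hskew a haF, my_sp_arev ha]
    omega

lemma myD_rev_iff (hskew : IsSkewOnF F ef) :
    ∀ a, a ∈ myD F ef h ↔ arev a ∈ myD F ef h := by
  intro a
  constructor
  · exact myD_rev F ef h hskew a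
  · intro hx
    have := myD_rev F ef h hskew _ hx
    rwa [my_arev_arev] at this

lemma my_notD
    (hharc : ∀ a, ArcF F a → h a.2 - h a.1 = bArc F ef a ∨ h a.2 - h a.1 = tArc F ef a) :
    ∀ a, ArcF F a → a ∉ myD F ef h → h a.2 - h a.1 = ef a + sp a := by
  intro a haF hnd
  rcases hharc a haF with hd | hd
  · unfold bArc at hd
    by_cases hint : cellA a ∈ F ∧ cellB a ∈ F
    · rw [if_pos hint] at hd
      rcases my_sp_pm haF.1 with hs | hs
      · exact absurd ⟨⟨haF.1, hint.1, hint.2⟩, by rw [hs] at hd ⊢; omega⟩ hnd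
      · rw [hs] at hd ⊢; omega
    · rw [if_neg hint] at hd; exact hd
  · unfold tArc at hd
    by_cases hint : cellA a ∈ F ∧ cellB a ∈ F
    · rw [if_pos hint] at hd
      rcases my_sp_pm haF.1 with hs | hs
      · rw [hs] at hd ⊢; omega
      · exact absurd ⟨⟨haF.1, hint.1, hint.2⟩, by rw [hs] at hd ⊢; omega⟩ hnd
    · rw [if_neg hint] at hd; exact hd

lemma my_cell_lemma
    (hskew : IsSkewOnF F ef)
    (hcyc : ∀ C, IsElemCycleF F C → IsClockwise C → sumOn sp C + sumOn ef C = 4 * DisF F C)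
    (hharc : ∀ a, ArcF F a → h a.2 - h a.1 = bArc F ef a ∨ h a.2 - h a.1 = tArc F ef a)
    (x y : ℤ) (hc : ((x, y) : Vtx) ∈ F) :
    ∃! a, a ∈ sides (x, y) ∧ a ∈ myD F ef h := by
  classical
  set σ : ℤ := colorSign (x, y) with hσdef
  have hσ : σ = 1 ∨ σ = -1 := by
    rw [hσdef]; unfold colorSign; split_ifs <;> simp
  have hwind : ∀ c' : Vtx,
      wind [((x,y):Vtx), (x,y+1), (x+1,y+1), (x+1,y), (x,y)] c' = if c' = (x, y) then -1 else 0 := by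
    intro c'
    show sumOn (windTerm c') _ = _
    unfold sumOn arcsOf
    simp only [List.tail_cons, List.zip_cons_cons, List.zip_nil_right, List.map_cons,
      List.map_nil, List.sum_cons, List.sum_nil]
    unfold windTerm
    norm_num [min_def, Prod.ext_iff]
    split_ifs <;> omega
  have hA1 : ArcF F (((x,y):Vtx), ((x,y+1):Vtx)) := by
    refine ⟨by show ((x:ℤ) - x).natAbs + ((y+1:ℤ) - y).natAbs = 1; omega, Or.inl ?_⟩
    unfold cellA
    norm_num
    exact hc
  have hA2 : ArcF F (((x,y+1):Vtx), ((x+1,y+1):Vtx)) := by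
    refine ⟨by show ((x+1:ℤ) - x).natAbs + ((y+1:ℤ) - (y+1)).natAbs = 1; omega, Or.inr ?_⟩
    unfold cellB
    norm_num [min_def]
    exact hc
  have hA3 : ArcF F (((x+1,y+1):Vtx), ((x+1,y):Vtx)) := by
    refine ⟨by show ((x+1:ℤ) - (x+1)).natAbs + ((y:ℤ) - (y+1)).natAbs = 1; omega, Or.inr ?_⟩
    unfold cellB
    norm_num
    exact hc
  have hA4 : ArcF F (((x+1,y):Vtx), ((x,y):Vtx)) := by
    refine ⟨by show ((x:ℤ) - (x+1)).natAbs + ((y:ℤ) - y).natAbs = 1; omega, Or.inl ?_⟩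
    unfold cellA
    norm_num [min_def]
    exact hc
  have helem : IsElemCycleF F [((x,y):Vtx), (x,y+1), (x+1,y+1), (x+1,y), (x,y)] := by
    refine ⟨⟨by simp, by simp, ?_⟩, ?_⟩
    · intro a ha
      unfold arcsOf at ha
      simp only [List.tail_cons, List.zip_cons_cons, List.zip_nil_right,
        List.mem_cons, List.not_mem_nil, or_false] at ha
      rcases ha with rfl | rfl | rfl | rfl
      exacts [hA1, hA2, hA3, hA4]
    · simp only [List.dropLast, List.nodup_cons, List.mem_cons, List.not_mem_nil,
        or_false, List.nodup_nil, and_true, not_or, Prod.ext_iff, not_and]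
      norm_num
  have hclock : IsClockwise [((x,y):Vtx), (x,y+1), (x+1,y+1), (x+1,y), (x,y)] := by
    intro c'
    rw [hwind c']
    split_ifs <;> omega
  have heq := hcyc _ helem hclock
  have hdis : DisF F [((x,y):Vtx), (x,y+1), (x+1,y+1), (x+1,y), (x,y)] = σ := by
    unfold DisF
    rw [Finset.sum_eq_single_of_mem (((x,y)):Vtx) hc]
    · rw [hwind (x, y), if_pos rfl, hσdef]; ring
    · intro b hb hbne
      rw [hwind b, if_neg hbne, zero_mul]
  have hcs01 : colorSign (x, y + 1) = -σ := by
    rw [hσdef]; unfold colorSign; split_ifs <;> omega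
  have hcs11 : colorSign (x + 1, y + 1) = σ := by
    rw [hσdef]; unfold colorSign; split_ifs <;> omega
  have hcs10 : colorSign (x + 1, y) = -σ := by
    rw [hσdef]; unfold colorSign; split_ifs <;> omega
  have hsp1 : sp (((x,y):Vtx), ((x,y+1):Vtx)) = σ := by
    show colorSign (x, y) * (((y + 1) - y) ^ 2 - (x - x) ^ 2) = σ
    rw [hσdef]; ring
  have hsp2 : sp (((x,y+1):Vtx), ((x+1,y+1):Vtx)) = σ := by
    show colorSign (x, y + 1) * (((y + 1) - (y + 1)) ^ 2 - ((x + 1) - x) ^ 2) = σ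
    rw [hcs01]; ring
  have hsp3 : sp (((x+1,y+1):Vtx), ((x+1,y):Vtx)) = σ := by
    show colorSign (x + 1, y + 1) * ((y - (y + 1)) ^ 2 - ((x + 1) - (x + 1)) ^ 2) = σ
    rw [hcs11]; ring
  have hsp4 : sp (((x+1,y):Vtx), ((x,y):Vtx)) = σ := by
    show colorSign (x + 1, y) * ((y - y) ^ 2 - (x - (x + 1)) ^ 2) = σ
    rw [hcs10]; ring
  have hsum : ∀ g : GArc → ℤ, sumOn g [((x,y):Vtx), (x,y+1), (x+1,y+1), (x+1,y), (x,y)] =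
      g (((x,y):Vtx), ((x,y+1):Vtx)) + g (((x,y+1):Vtx), ((x+1,y+1):Vtx)) +
      g (((x+1,y+1):Vtx), ((x+1,y):Vtx)) + g (((x+1,y):Vtx), ((x,y):Vtx)) := by
    intro g
    unfold sumOn arcsOf
    simp only [List.tail_cons, List.zip_cons_cons, List.zip_nil_right, List.map_cons,
      List.map_nil, List.sum_cons, List.sum_nil]
    ring
  rw [hsum sp, hsum ef, hdis, hsp1, hsp2, hsp3, hsp4] at heq
  have hef0 : ef (((x,y):Vtx), ((x,y+1):Vtx)) + ef (((x,y+1):Vtx), ((x+1,y+1):Vtx)) +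
      ef (((x+1,y+1):Vtx), ((x+1,y):Vtx)) + ef (((x+1,y):Vtx), ((x,y):Vtx)) = 0 := by omega
  have key : ∀ u v : Vtx, ArcF F (u, v) → sp (u, v) = σ →
      ((u, v) ∈ myD F ef h ∧ h v - h u = ef (u, v) - 3 * σ) ∨
      ((u, v) ∉ myD F ef h ∧ h v - h u = ef (u, v) + σ) := by
    intro u v haF hsa
    by_cases hd : (u, v) ∈ myD F ef h
    · exact Or.inl ⟨hd, by rw [← hsa]; exact hd.2⟩
    · exact Or.inr ⟨hd, by rw [← hsa]; exact my_notD F ef h hharc (u, v) haF hd⟩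
  have hrev4 : arev (((x+1,y):Vtx), ((x+1,y+1):Vtx)) = (((x+1,y+1):Vtx), ((x+1,y):Vtx)) := rfl
  have hrev1 : arev (((x,y):Vtx), ((x+1,y):Vtx)) = (((x+1,y):Vtx), ((x,y):Vtx)) := rfl
  have hD4iff : ((((x+1,y):Vtx), ((x+1,y+1):Vtx)) ∈ myD F ef h) ↔
      ((((x+1,y+1):Vtx), ((x+1,y):Vtx)) ∈ myD F ef h) := by
    rw [myD_rev_iff F ef h hskew ((((x+1,y):Vtx), ((x+1,y+1):Vtx))), hrev4]
  have hD1iff : ((((x,y):Vtx), ((x+1,y):Vtx)) ∈ myD F ef h) ↔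
      ((((x+1,y):Vtx), ((x,y):Vtx)) ∈ myD F ef h) := by
    rw [myD_rev_iff F ef h hskew ((((x,y):Vtx), ((x+1,y):Vtx))), hrev1]
  have hsides : sides ((x, y) : Vtx) = [(((x,y):Vtx), ((x+1,y):Vtx)), (((x,y+1):Vtx), ((x+1,y+1):Vtx)),
      (((x,y):Vtx), ((x,y+1):Vtx)), (((x+1,y):Vtx), ((x+1,y+1):Vtx))] := rfl
  rcases key _ _ hA1 hsp1 with ⟨m1, e1⟩ | ⟨m1, e1⟩ <;>
    rcases key _ _ hA2 hsp2 with ⟨m2, e2⟩ | ⟨m2, e2⟩ <;>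
      rcases key _ _ hA3 hsp3 with ⟨m3, e3⟩ | ⟨m3, e3⟩ <;>
        rcases key _ _ hA4 hsp4 with ⟨m4, e4⟩ | ⟨m4, e4⟩
  all_goals (
    first
    | (exfalso; rcases hσ with hs | hs <;> omega)
    | skip)
  · refine ⟨(((x,y):Vtx), ((x,y+1):Vtx)), ⟨by rw [hsides]; simp, m1⟩, ?_⟩
    rintro a' ⟨hs, hd⟩
    rw [hsides] at hs
    simp only [List.mem_cons, List.not_mem_nil, or_false] at hs
    rcases hs with rfl | rfl | rfl | rfl
    · exact absurd (hD1iff.mp hd) m4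
    · exact absurd hd m2
    · rfl
    · exact absurd (hD4iff.mp hd) m3
  · refine ⟨(((x,y+1):Vtx), ((x+1,y+1):Vtx)), ⟨by rw [hsides]; simp, m2⟩, ?_⟩
    rintro a' ⟨hs, hd⟩
    rw [hsides] at hs
    simp only [List.mem_cons, List.not_mem_nil, or_false] at hs
    rcases hs with rfl | rfl | rfl | rfl
    · exact absurd (hD1iff.mp hd) m4
    · rfl
    · exact absurd hd m1
    · exact absurd (hD4iff.mp hd) m3
  · refine ⟨(((x+1,y):Vtx), ((x+1,y+1):Vtx)), ⟨by rw [hsides]; simp, hD4iff.mpr m3⟩, ?_⟩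
    rintro a' ⟨hs, hd⟩
    rw [hsides] at hs
    simp only [List.mem_cons, List.not_mem_nil, or_false] at hs
    rcases hs with rfl | rfl | rfl | rfl
    · exact absurd (hD1iff.mp hd) m4
    · exact absurd hd m2
    · exact absurd hd m1
    · rfl
  · refine ⟨(((x,y):Vtx), ((x+1,y):Vtx)), ⟨by rw [hsides]; simp, hD1iff.mpr m4⟩, ?_⟩
    rintro a' ⟨hs, hd⟩
    rw [hsides] at hs
    simp only [List.mem_cons, List.not_mem_nil, or_false] at hs
    rcases hs with rfl | rfl | rfl | rfl
    · rfl
    · exact absurd hd m2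
    · exact absurd hd m1
    · exact absurd (hD4iff.mp hd) m3

end AuxLemmas
/-- every function of `H_F` is the height function of some tiling
of `F`. -/
theorem exists_tiling_of_height (F : Finset Vtx) (hF : IsFigure F)
    (ef : GArc → ℤ) (hef : IsEquilibrium F ef)
    (w0 : Vtx) (hw0 : OnOuterBoundary F w0)
    (h : Vtx → ℤ) (hh : InHF F ef w0 h) :
    ∃ D : Set GArc, IsTiling F D ∧ IsHeightOf F ef D w0 h := by
  classical
  obtain ⟨hw00, hharc⟩ := hh
  obtain ⟨hskew, hcyc⟩ := hef
  refine ⟨myD F ef h, ⟨myD_rev F ef h hskew, fun a haD => haD.1, ?_⟩, hw00, ?_⟩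
  · rintro ⟨x, y⟩ hc
    exact my_cell_lemma F ef h hskew hcyc hharc x y hc
  · intro a haF
    unfold gT chi
    by_cases hd : a ∈ myD F ef h
    · rw [if_pos hd, hd.2]; ring
    · rw [if_neg hd, my_notD F ef h hharc a haF hd]; ring
end

section
/- Let F be a figure with equilibrium function eq. If two tilings T and T' of F satisfy g_T=g_{T'} (equivalently, h_T=h_{T'}), then T=T'; hence the map T↦h_T is an injection from the tilings of F into H_F. -/
open Classical

noncomputable section

lemma sp_ne_zero {a : GArc} (ha : IsArc a) : sp a ≠ 0 := by
  unfold IsArc at ha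
  unfold sp colorSign
  set dx := a.2.1 - a.1.1
  set dy := a.2.2 - a.1.2
  have h : (dx = 0 ∧ (dy = 1 ∨ dy = -1)) ∨ (dy = 0 ∧ (dx = 1 ∨ dx = -1)) := by omega
  rcases h with ⟨h1, h2 | h2⟩ | ⟨h1, h2 | h2⟩ <;> rw [h1, h2] <;> split <;> norm_num

lemma chi_eq_of_gT_eq {F : Finset Vtx} {ef : GArc → ℤ} {D D' : Set GArc} {a : GArc}
    (ha : ArcF F a) (hg : gT ef D a = gT ef D' a) : chi D a = chi D' a := by
  have hsp := sp_ne_zero ha.1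
  unfold gT at hg
  have : sp a * (4 * (chi D' a - chi D a)) = 0 := by ring_nf; ring_nf at hg; linarith
  rcases mul_eq_zero.1 this with h | h
  · exact absurd h hsp
  · omega

end
/-- if two tilings have the same height difference function
(equivalently the same height function), they are equal; hence `T ↦ h_T` is
injective. -/
theorem tiling_determined_by_heights (F : Finset Vtx) (hF : IsFigure F)
    (ef : GArc → ℤ) (hef : IsEquilibrium F ef)
    (D D' : Set GArc) (hD : IsTiling F D) (hD' : IsTiling F D') :
    ((∀ a, ArcF F a → gT ef D a = gT ef D' a) → D = D') ∧
    (∀ (w0 : Vtx) (h : Vtx → ℤ), OnOuterBoundary F w0 →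
      IsHeightOf F ef D w0 h → IsHeightOf F ef D' w0 h → D = D') := by
  have key : (∀ a, ArcF F a → gT ef D a = gT ef D' a) → D = D' := by
    intro hg
    ext a
    constructor
    · intro haD
      have harc : ArcF F a := ⟨(hD.2.1 a haD).1, Or.inl (hD.2.1 a haD).2.1⟩
      have := chi_eq_of_gT_eq harc (hg a harc)
      unfold chi at this
      simp only [haD, if_true] at this
      by_contra hc
      simp [hc] at this
    · intro haD'
      have harc : ArcF F a := ⟨(hD'.2.1 a haD').1, Or.inl (hD'.2.1 a haD').2.1⟩
      have := chi_eq_of_gT_eq harc (hg a harc)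
      unfold chi at this
      simp only [haD', if_true] at this
      by_contra hc
      simp [hc] at this
  refine ⟨key, ?_⟩
  intro w0 h _ h1 h2
  exact key (fun a ha => by rw [← h1.2 a ha, h2.2 a ha])
end

section
/- Let F be a figure with equilibrium function eq and base vertex w₀. For every pair of functions h,h'∈H_F and every vertex v∈V_F, the difference h(v)−h'(v) is divisible by 4. -/
open Classical

/-- reachability in the (symmetrized) graph `G_F` -/
def ReachF (F : Finset Vtx) (x y : Vtx) : Prop :=
  Relation.ReflTransGen (fun u v => ArcF F (u, v) ∨ ArcF F (v, u)) x y

lemma reachF_single {F : Finset Vtx} {x y : Vtx}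
    (h : ArcF F (x, y) ∨ ArcF F (y, x)) : ReachF F x y :=
  Relation.ReflTransGen.single h

lemma reachF_refl {F : Finset Vtx} {x : Vtx} : ReachF F x x :=
  Relation.ReflTransGen.refl

lemma reachF_symm {F : Finset Vtx} {x y : Vtx} (hxy : ReachF F x y) : ReachF F y x := by
  induction hxy with
  | refl => exact .refl
  | tail hstep hbc ih =>
      rcases hbc with hbc | hbc
      · exact (reachF_single (Or.inr hbc)).trans ih
      · exact (reachF_single (Or.inl hbc)).trans ih

lemma arcF_bottom {F : Finset Vtx} {c : Vtx} (hc : c ∈ F) :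
    ArcF F ((c.1, c.2), (c.1 + 1, c.2)) := by
  refine ⟨by simp [IsArc], Or.inl ?_⟩
  have : cellA ((c.1, c.2), (c.1 + 1, c.2)) = c := by
    simp only [cellA, if_pos rfl]
    have : min c.1 (c.1 + 1) = c.1 := by omega
    simp [this]
  rwa [this]

lemma arcF_left {F : Finset Vtx} {c : Vtx} (hc : c ∈ F) :
    ArcF F ((c.1, c.2), (c.1, c.2 + 1)) := by
  refine ⟨by simp [IsArc], Or.inl ?_⟩
  have : cellA ((c.1, c.2), (c.1, c.2 + 1)) = c := by
    simp only [cellA]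
    rw [if_neg (by omega)]
    have : min c.2 (c.2 + 1) = c.2 := by omega
    simp [this]
  rwa [this]

lemma arcF_right {F : Finset Vtx} {c : Vtx} (hc : c ∈ F) :
    ArcF F ((c.1 + 1, c.2), (c.1 + 1, c.2 + 1)) := by
  refine ⟨by simp [IsArc], Or.inr ?_⟩
  have : cellB ((c.1 + 1, c.2), (c.1 + 1, c.2 + 1)) = c := by
    simp only [cellB]
    rw [if_neg (by omega)]
    have h1 : min c.2 (c.2 + 1) = c.2 := by omega
    have h2 : c.1 + 1 - 1 = c.1 := by omega
    simp [h1, h2]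
  rwa [this]

/-- from the lower-left corner of a cell of `F` one can reach any of its corners -/
lemma reach_corner {F : Finset Vtx} {c v : Vtx} (hc : c ∈ F) (hv : isCorner v c) :
    ReachF F c v := by
  obtain ⟨h1 | h1, h2 | h2⟩ := hv
  · have : v = c := Prod.ext h1 h2
    rw [this]
    exact reachF_refl
  · have : v = (c.1, c.2 + 1) := Prod.ext h1 h2
    rw [this]
    exact reachF_single (Or.inl (arcF_left hc))
  · have : v = (c.1 + 1, c.2) := Prod.ext h1 h2
    rw [this]
    exact reachF_single (Or.inl (arcF_bottom hc))
  · have : v = (c.1 + 1, c.2 + 1) := Prod.ext h1 h2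
    rw [this]
    exact (reachF_single (Or.inl (arcF_bottom hc))).trans
      (reachF_single (Or.inl (arcF_right hc)))

lemma shared_corner {x y : Vtx} (hxy : adj4 x y) :
    isCorner (max x.1 y.1, max x.2 y.2) x ∧ isCorner (max x.1 y.1, max x.2 y.2) y := by
  simp only [adj4] at hxy
  simp only [isCorner]
  omega

/-- any two functions of `H_F` are congruent modulo 4 at every
vertex of `V_F`. -/
theorem heights_congruent_mod_four (F : Finset Vtx) (hF : IsFigure F)
    (ef : GArc → ℤ) (hef : IsEquilibrium F ef)
    (w0 : Vtx) (hw0 : OnOuterBoundary F w0)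
    (h h' : Vtx → ℤ) (hh : InHF F ef w0 h) (hh' : InHF F ef w0 h')
    (v : Vtx) (hv : v ∈ VF F) :
    (4 : ℤ) ∣ (h v - h' v) := by
  -- along any arc of `G_F`, `h` and `h'` change by amounts congruent mod 4
  have step_dvd : ∀ x y : Vtx, ArcF F (x, y) →
      (4 : ℤ) ∣ (h y - h' y) - (h x - h' x) := by
    intro x y ha
    have h1 := hh.2 _ ha
    have h2 := hh'.2 _ ha
    by_cases hint : cellA (x, y) ∈ F ∧ cellB (x, y) ∈ F
    · simp only [bArc, tArc, if_pos hint] at h1 h2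
      rcases h1 with h1 | h1 <;> rcases h2 with h2 | h2 <;> omega
    · simp only [bArc, tArc, if_neg hint] at h1 h2
      rcases h1 with h1 | h1 <;> rcases h2 with h2 | h2 <;> omega
  have reach_dvd : ∀ x y : Vtx, ReachF F x y →
      (4 : ℤ) ∣ (h y - h' y) - (h x - h' x) := by
    intro x y hxy
    induction hxy with
    | refl => simp
    | tail hab hbc ih =>
      rcases hbc with hbc | hbc
      · have := step_dvd _ _ hbc; omega
      · have := step_dvd _ _ hbc; omega
  -- `w0` reaches every vertex of `V_F`
  obtain ⟨c, hc, hvc⟩ := hv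
  obtain ⟨c0, hc0, hw0c⟩ := hw0.1
  have chain := hF.2.1 c0 hc0 c hc
  have hreach0 : ∀ c' : Vtx,
      Relation.ReflTransGen (fun x y => x ∈ F ∧ y ∈ F ∧ adj4 x y) c0 c' →
      c' ∈ F → ReachF F w0 c' := by
    intro c' hchain
    induction hchain with
    | refl => intro _; exact reachF_symm (reach_corner hc0 hw0c)
    | tail hab hbc ih =>
      intro _
      obtain ⟨hb, hc', hadj⟩ := hbc
      obtain ⟨hu1, hu2⟩ := shared_corner hadj
      exact ((ih hb).trans (reach_corner hb hu1)).trans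
        (reachF_symm (reach_corner hc' hu2))
  have hreach : ReachF F w0 v := (hreach0 c chain hc).trans (reach_corner hc hvc)
  have := reach_dvd _ _ hreach
  rw [hh.1, hh'.1] at this
  omega
end

section
/- Let F be a figure with equilibrium function eq and base vertex w₀. If h and h' belong to H_F, then the pointwise minimum inf(h,h') and the pointwise maximum sup(h,h') also belong to H_F; consequently (H_F,≤), ordered pointwise, is a distributive lattice. -/
open Classical

/-!
On every arc `t - b ∈ {0, 4}`, so the increments of two elements `h, h'` of `H_F` along an arc
differ by `0` or `±4`. Since `G_F` is connected and both vanish at `w₀`, `h ≡ h' [ZMOD 4]` on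
`V_F`. Hence at the tail of an arc either `h = h'`, and the increment of `min h h'` is one of the
two admissible increments, or `h` and `h'` differ by at least `4`, and the smaller one stays
weakly smaller at the head, so `min h h'` follows it along the arc. Likewise for `max`.
-/

lemma tArc_eq_bArc_or_add_four (F : Finset Vtx) (ef : GArc → ℤ) (a : GArc) :
    tArc F ef a = bArc F ef a ∨ tArc F ef a = bArc F ef a + 4 := by
  unfold tArc bArc
  split_ifs <;> omega

lemma min_sub_min_eq_or {x x' y y' b t : ℤ} (hbt : t = b ∨ t = b + 4)
    (hx : x ≡ x' [ZMOD 4]) (hy : y - x = b ∨ y - x = t) (hy' : y' - x' = b ∨ y' - x' = t) :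
    min y y' - min x x' = b ∨ min y y' - min x x' = t := by
  unfold Int.ModEq at hx
  omega

lemma max_sub_max_eq_or {x x' y y' b t : ℤ} (hbt : t = b ∨ t = b + 4)
    (hx : x ≡ x' [ZMOD 4]) (hy : y - x = b ∨ y - x = t) (hy' : y' - x' = b ∨ y' - x' = t) :
    max y y' - max x x' = b ∨ max y y' - max x x' = t := by
  unfold Int.ModEq at hx
  omega

lemma ArcF.fst_mem_VF {F : Finset Vtx} {a : GArc} (ha : ArcF F a) : a.1 ∈ VF F := by
  obtain ⟨harc, hc | hc⟩ := ha <;> refine ⟨_, hc, ?_⟩ <;> unfold IsArc at harc <;>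
    simp only [isCorner, cellA, cellB] <;> split_ifs <;> omega

lemma arcF_of_side {F : Finset Vtx} {c : Vtx} (hc : c ∈ F) :
    ArcF F (c, (c.1 + 1, c.2)) ∧ ArcF F (c, (c.1, c.2 + 1)) ∧
      ArcF F ((c.1 + 1, c.2), (c.1 + 1, c.2 + 1)) := by
  simp [ArcF, IsArc, cellA, cellB, hc]

section Connectivity

variable {F : Finset Vtx} {r : Vtx → Vtx → Prop}

lemma rel_of_isCorner (hr : Equivalence r) (harc : ∀ a, ArcF F a → r a.1 a.2) {c v : Vtx}
    (hc : c ∈ F) (hv : isCorner v c) : r c v := by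
  obtain ⟨hbot, hleft, hright⟩ := arcF_of_side hc
  obtain ⟨x, y⟩ := v
  simp only [isCorner] at hv
  obtain ⟨rfl | rfl, rfl | rfl⟩ := hv
  · exact hr.refl c
  · exact harc _ hleft
  · exact harc _ hbot
  · exact hr.trans (harc _ hbot) (harc _ hright)

lemma isCorner_or_isCorner_of_adj4 {c c' : Vtx} (h : adj4 c c') :
    isCorner c' c ∨ isCorner c c' := by
  unfold adj4 at h
  unfold isCorner
  omega

lemma rel_of_adj4 (hr : Equivalence r) (harc : ∀ a, ArcF F a → r a.1 a.2) {c c' : Vtx}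
    (hc : c ∈ F) (hc' : c' ∈ F) (hadj : adj4 c c') : r c c' :=
  (isCorner_or_isCorner_of_adj4 hadj).elim (rel_of_isCorner hr harc hc)
    fun h => hr.symm (rel_of_isCorner hr harc hc' h)

/-- Connectedness of `G_F`. -/
theorem IsFigure.rel_of_mem_VF (hF : IsFigure F) (hr : Equivalence r)
    (harc : ∀ a, ArcF F a → r a.1 a.2) {u v : Vtx} (hu : u ∈ VF F) (hv : v ∈ VF F) : r u v := by
  obtain ⟨cu, hcu, hu⟩ := hu
  obtain ⟨cv, hcv, hv⟩ := hv
  have hcells : r cu cv :=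
    Relation.reflTransGen_le_of_equivalence_of_le hr
      (fun _ _ hadj => rel_of_adj4 hr harc hadj.1 hadj.2.1 hadj.2.2) cu cv (hF.2.1 cu hcu cv hcv)
  exact hr.trans (hr.symm (rel_of_isCorner hr harc hcu hu))
    (hr.trans hcells (rel_of_isCorner hr harc hcv hv))

end Connectivity

section HeightFunctions

variable {F : Finset Vtx} {ef : GArc → ℤ} {w0 : Vtx} {h h' : Vtx → ℤ}

lemma InHF.sub_modEq_of_arcF (hh : InHF F ef w0 h) (hh' : InHF F ef w0 h') {a : GArc}
    (ha : ArcF F a) : h a.1 - h' a.1 ≡ h a.2 - h' a.2 [ZMOD 4] := by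
  have htb := tArc_eq_bArc_or_add_four F ef a
  have hstep := hh.2 a ha
  have hstep' := hh'.2 a ha
  unfold Int.ModEq
  omega

lemma InHF.modEq (hF : IsFigure F) (hw0 : w0 ∈ VF F) (hh : InHF F ef w0 h)
    (hh' : InHF F ef w0 h') {v : Vtx} (hv : v ∈ VF F) : h v ≡ h' v [ZMOD 4] := by
  have hdiff : h w0 - h' w0 ≡ h v - h' v [ZMOD 4] :=
    hF.rel_of_mem_VF (r := fun u v => h u - h' u ≡ h v - h' v [ZMOD 4])
      ⟨fun _ => Int.ModEq.refl _, Int.ModEq.symm, Int.ModEq.trans⟩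
      (fun _ ha => hh.sub_modEq_of_arcF hh' ha) hw0 hv
  rw [hh.1, hh'.1] at hdiff
  unfold Int.ModEq at hdiff ⊢
  omega

end HeightFunctions

theorem HF_closed_under_inf_sup_general (F : Finset Vtx) (hF : IsFigure F)
    (ef : GArc → ℤ)
    (w0 : Vtx) (hw0 : OnOuterBoundary F w0)
    (h h' : Vtx → ℤ) (hh : InHF F ef w0 h) (hh' : InHF F ef w0 h') :
    InHF F ef w0 (fun v => min (h v) (h' v)) ∧
    InHF F ef w0 (fun v => max (h v) (h' v)) := by
  have hmod : ∀ a, ArcF F a → h a.1 ≡ h' a.1 [ZMOD 4] :=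
    fun _ ha => hh.modEq hF hw0.1 hh' ha.fst_mem_VF
  refine ⟨⟨by simp [hh.1, hh'.1], fun a ha => ?_⟩, ⟨by simp [hh.1, hh'.1], fun a ha => ?_⟩⟩
  · exact min_sub_min_eq_or (tArc_eq_bArc_or_add_four F ef a) (hmod a ha) (hh.2 a ha) (hh'.2 a ha)
  · exact max_sub_max_eq_or (tArc_eq_bArc_or_add_four F ef a) (hmod a ha) (hh.2 a ha) (hh'.2 a ha)

/-- `H_F` is closed under pointwise `min` and `max`, hence
`(H_F, ≤)` is a distributive lattice. -/
theorem HF_closed_under_inf_sup (F : Finset Vtx) (hF : IsFigure F)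
    (ef : GArc → ℤ) (hef : IsEquilibrium F ef)
    (w0 : Vtx) (hw0 : OnOuterBoundary F w0)
    (h h' : Vtx → ℤ) (hh : InHF F ef w0 h) (hh' : InHF F ef w0 h') :
    InHF F ef w0 (fun v => min (h v) (h' v)) ∧
    InHF F ef w0 (fun v => max (h v) (h' v)) :=
  HF_closed_under_inf_sup_general F hF ef w0 hw0 h h' hh hh'
end
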